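/- arXiv:1205.3589 — 3 statements merged into one kernel-verified Lean document; each statement's English description precedes it below -/
import Mathlib

section
/- Let T be a real symplectic 2n×2n matrix of lower block triangular form T = [[w⁻¹, 0], [uw⁻¹, wᵀ]] with u symmetric and w invertible n×n matrices, and suppose TΣTᵀ is diagonal for a symmetric positive definite 2n×2n matrix Σ. Then Σ_{qq}Σ_{qp}ᵀ − Σ_{qp}Σ_{qq} = 0, where Σ = [[Σ_{qq}, Σ_{qp}], [Σ_{pq}, Σ_{pp}]] in n×n blocks. -/
/-!
Write `Σ = [[A, B], [C, D]]`. The lower-left block of `T Σ Tᵀ` is `(u w⁻¹ A + wᵀ C) w⁻ᵀ`, so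
diagonality forces `C = N A` with `N = -w⁻ᵀ u w⁻¹` symmetric. As `Σ` is symmetric, `Bᵀ = C`, and
then `A Bᵀ = A N A = (N A)ᵀ A = B A`.
-/

open Matrix

noncomputable def J (n : ℕ) : Matrix (Fin n ⊕ Fin n) (Fin n ⊕ Fin n) ℝ :=
  Matrix.fromBlocks 0 1 (-1) 0

namespace Matrix

variable {m n α R : Type*}

theorem IsDiag.toBlocks₂₁_eq_zero [Zero α] {M : Matrix (m ⊕ n) (m ⊕ n) α} (h : M.IsDiag) :
    M.toBlocks₂₁ = 0 := by
  rw [← fromBlocks_toBlocks M] at h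
  exact (isDiag_fromBlocks_iff.1 h).2.2.1

theorem IsSymm.transpose_toBlocks₁₂ {M : Matrix (m ⊕ n) (m ⊕ n) α} (h : M.IsSymm) :
    M.toBlocks₁₂ᵀ = M.toBlocks₂₁ := by
  ext i j
  exact h.apply (Sum.inr i) (Sum.inl j)

theorem IsSymm.toBlocks₁₁ {M : Matrix (m ⊕ n) (m ⊕ n) α} (h : M.IsSymm) :
    M.toBlocks₁₁.IsSymm :=
  IsSymm.ext fun i j => h.apply (Sum.inl i) (Sum.inl j)

theorem IsSymm.transpose_mul_mul [Fintype n] [CommRing R] {u : Matrix n n R} (hu : u.IsSymm)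
    (M : Matrix n n R) : (Mᵀ * u * M).IsSymm := by
  simp only [IsSymm, transpose_mul, transpose_transpose, hu.eq, Matrix.mul_assoc]

theorem toBlocks₂₁_fromBlocks_mul_mul_transpose [Fintype m] [Fintype n] [CommRing R]
    (P : Matrix m m R) (Q : Matrix n m R) (S : Matrix n n R)
    (A : Matrix m m R) (B : Matrix m n R) (C : Matrix n m R) (D : Matrix n n R) :
    (fromBlocks P 0 Q S * fromBlocks A B C D * (fromBlocks P 0 Q S)ᵀ).toBlocks₂₁ =
      (Q * A + S * C) * Pᵀ := by
  simp [fromBlocks_transpose, fromBlocks_multiply]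

theorem IsSymm.mul_mul_eq_transpose_mul [Fintype n] [CommRing R] {A N : Matrix n n R}
    (hA : A.IsSymm) (hN : N.IsSymm) : A * (N * A) = (N * A)ᵀ * A := by
  rw [transpose_mul, hA.eq, hN.eq, Matrix.mul_assoc]

theorem toBlocks₂₁_eq_neg_mul_toBlocks₁₁ [Fintype n] [DecidableEq n] [CommRing R]
    {w : Matrix n n R} (hw : IsUnit w) (u : Matrix n n R) (S : Matrix (n ⊕ n) (n ⊕ n) R)
    (h : (fromBlocks w⁻¹ 0 (u * w⁻¹) wᵀ * S * (fromBlocks w⁻¹ 0 (u * w⁻¹) wᵀ)ᵀ).toBlocks₂₁ = 0) :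
    S.toBlocks₂₁ = -(w⁻¹ᵀ * u * w⁻¹) * S.toBlocks₁₁ := by
  rw [← fromBlocks_toBlocks S, toBlocks₂₁_fromBlocks_mul_mul_transpose,
    ((isUnit_transpose _).2 (isUnit_nonsing_inv_iff.2 hw)).mul_left_eq_zero,
    add_eq_zero_iff_eq_neg'] at h
  have hdet : IsUnit wᵀ.det := isUnit_det_transpose w ((isUnit_iff_isUnit_det w).1 hw)
  calc S.toBlocks₂₁ = wᵀ⁻¹ * (wᵀ * S.toBlocks₂₁) := (nonsing_inv_mul_cancel_left _ _ hdet).symm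
    _ = -(w⁻¹ᵀ * u * w⁻¹) * S.toBlocks₁₁ := by
      rw [h, transpose_nonsing_inv]
      simp only [Matrix.mul_neg, Matrix.neg_mul, Matrix.mul_assoc]

end Matrix

theorem stmt10_general {n : ℕ} (w u : Matrix (Fin n) (Fin n) ℝ) (hw : IsUnit w) (hu : u.IsSymm)
    (T Sg : Matrix (Fin n ⊕ Fin n) (Fin n ⊕ Fin n) ℝ)
    (hT : T = Matrix.fromBlocks w⁻¹ 0 (u * w⁻¹) wᵀ)
    (hSgs : Sg.IsSymm)
    (hdiag : (T * Sg * Tᵀ).IsDiag) :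
    Sg.toBlocks₁₁ * (Sg.toBlocks₁₂)ᵀ - Sg.toBlocks₁₂ * Sg.toBlocks₁₁ = 0 := by
  have hC : Sg.toBlocks₂₁ = -(w⁻¹ᵀ * u * w⁻¹) * Sg.toBlocks₁₁ := by
    subst hT
    exact toBlocks₂₁_eq_neg_mul_toBlocks₁₁ hw u Sg hdiag.toBlocks₂₁_eq_zero
  have hB : Sg.toBlocks₁₂ = Sg.toBlocks₂₁ᵀ := by
    rw [← hSgs.transpose_toBlocks₁₂, transpose_transpose]
  rw [hB, transpose_transpose, hC, sub_eq_zero]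
  exact hSgs.toBlocks₁₁.mul_mul_eq_transpose_mul (hu.transpose_mul_mul _).neg

theorem stmt10 {n : ℕ} (w u : Matrix (Fin n) (Fin n) ℝ) (hw : IsUnit w) (hu : u.IsSymm)
    (T Sg : Matrix (Fin n ⊕ Fin n) (Fin n ⊕ Fin n) ℝ)
    (hT : T = Matrix.fromBlocks w⁻¹ 0 (u * w⁻¹) wᵀ)
    (hTsp : Tᵀ * J n * T = J n)
    (hSg : Sg.PosDef) (hSgs : Sg.IsSymm)
    (hdiag : (T * Sg * Tᵀ).IsDiag) :
    Sg.toBlocks₁₁ * (Sg.toBlocks₁₂)ᵀ - Sg.toBlocks₁₂ * Sg.toBlocks₁₁ = 0 :=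
  stmt10_general w u hw hu T Sg hT hSgs hdiag
end

section
/- Let W = [[β, -α], [-αᵀ, γ]] be a 2n×2n real symmetric positive definite symplectic matrix, and let w be an invertible n×n matrix with β = wwᵀ. Define u = w⁻¹αw. Then u is symmetric and γ = w⁻ᵀ(I + u²)w⁻¹; consequently T = [[w⁻¹, 0], [uw⁻¹, wᵀ]] is symplectic and satisfies W = T⁻¹T⁻ᵀ. -/
/-!
Symplecticity of `W` gives `α β = β αᵀ` and `β γ = 1 + α²`; conjugating by `w` turns these into
`uᵀ = u` and `wᵀ γ w = 1 + u²`. The matrix `T` factors as `L D` with `L = [[1, 0], [u, 1]]` and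
`D = diag(w⁻¹, wᵀ)`, both symplectic, and `D W Dᵀ = [[1, -u], [-u, 1 + u²]] = L⁻¹ L⁻ᵀ`, so that
`T W Tᵀ = 1`.
-/

open Matrix Polynomial

namespace Matrix

variable {m R : Type*} [Fintype m] [DecidableEq m] [CommRing R]

section Blocks

variable {A B P Q S T u : Matrix m m R}

local notation "Ω" => (fromBlocks 0 1 (-1) 0 : Matrix (m ⊕ m) (m ⊕ m) R)

lemma symplectic_fromBlocks_relations {β α γ : Matrix m m R} (hβ : βᵀ = β)
    (h : (fromBlocks β (-α) (-αᵀ) γ)ᵀ * Ω * fromBlocks β (-α) (-αᵀ) γ = Ω) :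
    α * β = β * αᵀ ∧ β * γ = 1 + α * α := by
  simp only [fromBlocks_transpose, fromBlocks_multiply, transpose_neg, transpose_transpose, hβ,
    fromBlocks_inj] at h
  obtain ⟨h₁₁, h₁₂, -, -⟩ := h
  constructor
  · linear_combination (norm := noncomm_ring) h₁₁
  · linear_combination (norm := noncomm_ring) h₁₂

lemma fromBlocks_lower_mul_diag :
    fromBlocks 1 0 u 1 * fromBlocks A 0 0 B = fromBlocks A 0 (u * A) B := by
  simp [fromBlocks_multiply]

lemma fromBlocks_diag_mul_mul_transpose :
    fromBlocks A 0 0 B * fromBlocks P Q S T * (fromBlocks A 0 0 B)ᵀ =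
      fromBlocks (A * P * Aᵀ) (A * Q * Bᵀ) (B * S * Aᵀ) (B * T * Bᵀ) := by
  simp [fromBlocks_multiply, fromBlocks_transpose, Matrix.mul_assoc]

lemma fromBlocks_lower_mul_mul_transpose (hu : u.IsSymm) :
    fromBlocks 1 0 u 1 * fromBlocks 1 (-u) (-u) (1 + u ^ 2) * (fromBlocks 1 0 u 1)ᵀ = 1 := by
  simp only [fromBlocks_transpose, transpose_zero, transpose_one, hu.eq, ← fromBlocks_one,
    fromBlocks_multiply, fromBlocks_inj]
  refine ⟨?_, ?_, ?_, ?_⟩ <;> noncomm_ring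

lemma transpose_mul_J_mul_fromBlocks_lower (hu : u.IsSymm) :
    (fromBlocks 1 0 u 1)ᵀ * Ω * fromBlocks 1 0 u 1 = Ω := by
  simp only [fromBlocks_transpose, transpose_zero, transpose_one, hu.eq, fromBlocks_multiply,
    fromBlocks_inj]
  refine ⟨?_, ?_, ?_, ?_⟩ <;> noncomm_ring

lemma transpose_mul_J_mul_fromBlocks_diag (h : Aᵀ * B = 1) :
    (fromBlocks A 0 0 B)ᵀ * Ω * fromBlocks A 0 0 B = Ω := by
  have h' : Bᵀ * A = 1 := by rw [← transpose_transpose A, ← transpose_mul, h, transpose_one]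
  simp [fromBlocks_transpose, fromBlocks_multiply, h, h']

end Blocks

section Inverse

variable {ι : Type*} [Fintype ι]

lemma transpose_mul_mul_mul_eq_of_eq {K L D : Matrix ι ι R} (hL : Lᵀ * K * L = K)
    (hD : Dᵀ * K * D = K) : (L * D)ᵀ * K * (L * D) = K := by
  calc (L * D)ᵀ * K * (L * D) = Dᵀ * (Lᵀ * K * L) * D := by
        simp only [transpose_mul, Matrix.mul_assoc]
    _ = K := by rw [hL, hD]

lemma mul_mul_mul_transpose (L D X : Matrix ι ι R) :
    L * D * X * (L * D)ᵀ = L * (D * X * Dᵀ) * Lᵀ := by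
  simp only [transpose_mul, Matrix.mul_assoc]

lemma eq_inv_mul_inv_transpose_of_mul_mul_transpose_eq_one [DecidableEq ι] {A X : Matrix ι ι R}
    (h : A * X * Aᵀ = 1) : X = A⁻¹ * A⁻¹ᵀ := by
  have hA : A * (X * Aᵀ) = 1 := by rwa [← Matrix.mul_assoc]
  rw [transpose_nonsing_inv, inv_eq_left_inv h, ← Matrix.mul_assoc, inv_eq_right_inv hA,
    mul_eq_one_comm.mp hA, Matrix.one_mul]

end Inverse

section Conjugation

variable {w α γ : Matrix m m R}

lemma isSymm_inv_mul_mul_of_mul_eq (hw : IsUnit w) (h : α * (w * wᵀ) = w * wᵀ * αᵀ) :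
    (w⁻¹ * α * w).IsSymm := by
  have hw' := (isUnit_iff_isUnit_det w).mp hw
  calc (w⁻¹ * α * w)ᵀ = w⁻¹ * (w * wᵀ * αᵀ) * (wᵀ)⁻¹ := by
        simp [transpose_mul, Matrix.mul_assoc, hw', transpose_nonsing_inv]
    _ = w⁻¹ * α * w := by
        rw [← h]; simp [Matrix.mul_assoc, hw']

lemma transpose_mul_mul_eq_one_add_sq (hw : IsUnit w) (h : w * wᵀ * γ = 1 + α * α) :
    wᵀ * γ * w = 1 + (w⁻¹ * α * w) ^ 2 := by
  have hw' := (isUnit_iff_isUnit_det w).mp hw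
  calc wᵀ * γ * w = w⁻¹ * (w * wᵀ * γ) * w := by simp [Matrix.mul_assoc, hw']
    _ = 1 + (w⁻¹ * α * w) ^ 2 := by
        rw [h]; simp [sq, Matrix.mul_add, Matrix.add_mul, Matrix.mul_assoc, hw']

lemma fromBlocks_diag_mul_fromBlocks_mul_transpose (hw : IsUnit w)
    (hu : (w⁻¹ * α * w).IsSymm) (hγ : wᵀ * γ * w = 1 + (w⁻¹ * α * w) ^ 2) :
    fromBlocks w⁻¹ 0 0 wᵀ * fromBlocks (w * wᵀ) (-α) (-αᵀ) γ * (fromBlocks w⁻¹ 0 0 wᵀ)ᵀ =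
      fromBlocks 1 (-(w⁻¹ * α * w)) (-(w⁻¹ * α * w)) (1 + (w⁻¹ * α * w) ^ 2) := by
  have hw' := (isUnit_iff_isUnit_det w).mp hw
  rw [fromBlocks_diag_mul_mul_transpose, transpose_transpose, hγ]
  congr 1
  · simp [hw', transpose_nonsing_inv]
  · simp
  · rw [← hu.eq]; simp [transpose_mul, Matrix.mul_assoc]

end Conjugation

end Matrix

theorem stmt12_general {n : ℕ} (β α γ w : Matrix (Fin n) (Fin n) ℝ)
    (W : Matrix (Fin n ⊕ Fin n) (Fin n ⊕ Fin n) ℝ)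
    (hW : W = Matrix.fromBlocks β (-α) (-αᵀ) γ)
    (hsp : Wᵀ * J n * W = J n)
    (hw : IsUnit w) (hβ : β = w * wᵀ) :
    (w⁻¹ * α * w).IsSymm ∧
    γ = (wᵀ)⁻¹ * (1 + (w⁻¹ * α * w) ^ 2) * w⁻¹ ∧
    (Matrix.fromBlocks w⁻¹ 0 ((w⁻¹ * α * w) * w⁻¹) wᵀ)ᵀ * J n *
      (Matrix.fromBlocks w⁻¹ 0 ((w⁻¹ * α * w) * w⁻¹) wᵀ) = J n ∧
    W = (Matrix.fromBlocks w⁻¹ 0 ((w⁻¹ * α * w) * w⁻¹) wᵀ)⁻¹ *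
        ((Matrix.fromBlocks w⁻¹ 0 ((w⁻¹ * α * w) * w⁻¹) wᵀ)⁻¹)ᵀ := by
  subst hW hβ
  obtain ⟨hαβ, hβγ⟩ := symplectic_fromBlocks_relations (by simp) hsp
  set u := w⁻¹ * α * w
  have hu : u.IsSymm := isSymm_inv_mul_mul_of_mul_eq hw hαβ
  have hγ : wᵀ * γ * w = 1 + u ^ 2 := transpose_mul_mul_eq_one_add_sq hw hβγ
  have hdet := (isUnit_iff_isUnit_det w).mp hw
  rw [← fromBlocks_lower_mul_diag]
  refine ⟨hu, ?_, ?_, ?_⟩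
  · rw [← hγ]
    simp only [← Matrix.mul_assoc]
    rw [mul_nonsing_inv_cancel_right _ _ hdet, nonsing_inv_mul _ (by simpa using hdet),
      Matrix.one_mul]
  · refine transpose_mul_mul_mul_eq_of_eq (transpose_mul_J_mul_fromBlocks_lower hu)
      (transpose_mul_J_mul_fromBlocks_diag ?_)
    rw [transpose_nonsing_inv, nonsing_inv_mul _ (by simpa using hdet)]
  · apply eq_inv_mul_inv_transpose_of_mul_mul_transpose_eq_one
    rw [mul_mul_mul_transpose, fromBlocks_diag_mul_fromBlocks_mul_transpose hw hu hγ,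
      fromBlocks_lower_mul_mul_transpose hu]

theorem stmt12 {n : ℕ} (β α γ w : Matrix (Fin n) (Fin n) ℝ)
    (W : Matrix (Fin n ⊕ Fin n) (Fin n ⊕ Fin n) ℝ)
    (hW : W = Matrix.fromBlocks β (-α) (-αᵀ) γ)
    (hsymm : W.IsSymm) (hpd : W.PosDef) (hsp : Wᵀ * J n * W = J n)
    (hw : IsUnit w) (hβ : β = w * wᵀ) :
    (w⁻¹ * α * w).IsSymm ∧
    γ = (wᵀ)⁻¹ * (1 + (w⁻¹ * α * w) ^ 2) * w⁻¹ ∧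
    (Matrix.fromBlocks w⁻¹ 0 ((w⁻¹ * α * w) * w⁻¹) wᵀ)ᵀ * J n *
      (Matrix.fromBlocks w⁻¹ 0 ((w⁻¹ * α * w) * w⁻¹) wᵀ) = J n ∧
    W = (Matrix.fromBlocks w⁻¹ 0 ((w⁻¹ * α * w) * w⁻¹) wᵀ)⁻¹ *
        ((Matrix.fromBlocks w⁻¹ 0 ((w⁻¹ * α * w) * w⁻¹) wᵀ)⁻¹)ᵀ :=
  stmt12_general β α γ w W hW hsp hw hβ
end

section
/- Let W = [[β, -α], [-αᵀ, γ]] be a 2n×2n real symmetric positive definite symplectic matrix and define T₃ as the positive definite symmetric square root of W⁻¹. Then T₃ is symplectic and W = T₃⁻¹T₃⁻ᵀ = T₃⁻². -/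
/-!
Conjugation by `J` sends a symmetric symplectic matrix to its inverse, and conversely. Since
`T₃² = W⁻¹` is symmetric and symplectic, `Jᵀ T₃² J = T₃⁻²`; as `J` is orthogonal, `Jᵀ T₃ J` and
`T₃⁻¹` are then two positive semidefinite square roots of the same matrix, so they coincide, which
says that `T₃` is symplectic.
-/

open Matrix Polynomial

namespace Matrix.PosDef

variable {n 𝕜 : Type*} [Fintype n] [DecidableEq n] [RCLike 𝕜]

open scoped ComplexOrder MatrixOrder in
theorem conjTranspose_mul_mul_eq_inv_of_mul_self {P U : Matrix n n 𝕜} (hP : P.PosDef)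
    (hU : U ∈ unitaryGroup n 𝕜) (h : Uᴴ * (P * P) * U = (P * P)⁻¹) : Uᴴ * P * U = P⁻¹ := by
  have hUU : U * Uᴴ = 1 := Unitary.mul_star_self_of_mem hU
  refine (CFC.mul_self_eq_mul_self_iff _ _ (hP.posSemidef.conjTranspose_mul_mul_same U).nonneg
    hP.inv.posSemidef.nonneg).1 ?_
  calc Uᴴ * P * U * (Uᴴ * P * U) = Uᴴ * (P * P) * U := by
        simp only [Matrix.mul_assoc, ← Matrix.mul_assoc U, hUU, Matrix.one_mul]
    _ = P⁻¹ * P⁻¹ := by rw [h, Matrix.mul_inv_rev]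

end Matrix.PosDef

namespace SymplecticGroup

variable {l R : Type*} [DecidableEq l] [Fintype l] [CommRing R]

theorem J_mul_J_transpose : J l R * (J l R)ᵀ = 1 := by
  rw [J_transpose, Matrix.mul_neg, J_squared, neg_neg]

theorem J_mem_unitaryGroup : J l ℝ ∈ unitaryGroup (l ⊕ l) ℝ := by
  rw [mem_unitaryGroup_iff, star_eq_conjTranspose, conjTranspose_eq_transpose_of_trivial,
    J_mul_J_transpose]

theorem nonsing_inv_mem {A : Matrix (l ⊕ l) (l ⊕ l) R} (hA : A ∈ symplecticGroup l R) :
    A⁻¹ ∈ symplecticGroup l R :=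
  coe_inv' ⟨A, hA⟩ ▸ (⟨A, hA⟩⁻¹ : symplecticGroup l R).2

theorem mem_iff_transpose_J_mul_mul_J_eq_inv {A : Matrix (l ⊕ l) (l ⊕ l) R} (hA : A.IsSymm)
    (hdet : IsUnit A.det) : A ∈ symplecticGroup l R ↔ (J l R)ᵀ * A * J l R = A⁻¹ := by
  refine ⟨fun h => ?_, fun h => ?_⟩
  · rw [inv_eq_symplectic_inv A h, J_transpose, hA.eq]
  · rw [mem_iff', hA.eq]
    calc A * J l R * A = J l R * ((J l R)ᵀ * A * J l R) * A := by
          simp only [← Matrix.mul_assoc, J_mul_J_transpose, Matrix.one_mul]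
      _ = J l R := by rw [h, Matrix.mul_assoc, nonsing_inv_mul _ hdet, Matrix.mul_one]

end SymplecticGroup

theorem J_eq_neg_J (n : ℕ) : J n = -Matrix.J (Fin n) ℝ := by
  rw [_root_.J, Matrix.J, fromBlocks_neg, neg_zero, neg_neg]

theorem transpose_mul_J_mul_eq_J_iff {n : ℕ} {A : Matrix (Fin n ⊕ Fin n) (Fin n ⊕ Fin n) ℝ} :
    Aᵀ * J n * A = J n ↔ A ∈ symplecticGroup (Fin n) ℝ := by
  rw [SymplecticGroup.mem_iff', J_eq_neg_J, Matrix.mul_neg, Matrix.neg_mul, neg_inj]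

open SymplecticGroup in
theorem stmt19_general {n : ℕ} (W T₃ : Matrix (Fin n ⊕ Fin n) (Fin n ⊕ Fin n) ℝ)
    (hWsp : Wᵀ * J n * W = J n)
    (hT₃pd : T₃.PosDef) (hT₃s : T₃.IsSymm) (hT₃sq : T₃ * T₃ = W⁻¹) :
    T₃ᵀ * J n * T₃ = J n ∧ W = T₃⁻¹ * (T₃⁻¹)ᵀ ∧ W = T₃⁻¹ * T₃⁻¹ := by
  have hT₃u : IsUnit T₃.det := hT₃pd.det_pos.ne'.isUnit
  have hT₃squ : IsUnit (T₃ * T₃).det := by rw [det_mul]; exact hT₃u.mul hT₃u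
  have hW : W = T₃⁻¹ * T₃⁻¹ := by
    rw [← Matrix.mul_inv_rev, hT₃sq, nonsing_inv_nonsing_inv W (isUnit_nonsing_inv_det_iff.1
      (hT₃sq ▸ hT₃squ))]
  have hT₃sq_mem : T₃ * T₃ ∈ symplecticGroup (Fin n) ℝ :=
    hT₃sq ▸ nonsing_inv_mem (transpose_mul_J_mul_eq_J_iff.1 hWsp)
  have hT₃sq_symm : (T₃ * T₃).IsSymm := by rw [IsSymm, transpose_mul, hT₃s.eq]
  have hJT₃sqJ : (Matrix.J (Fin n) ℝ)ᴴ * (T₃ * T₃) * Matrix.J (Fin n) ℝ = (T₃ * T₃)⁻¹ := by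
    rw [conjTranspose_eq_transpose_of_trivial,
      ← mem_iff_transpose_J_mul_mul_J_eq_inv hT₃sq_symm hT₃squ]
    exact hT₃sq_mem
  have hJT₃J : (Matrix.J (Fin n) ℝ)ᵀ * T₃ * Matrix.J (Fin n) ℝ = T₃⁻¹ := by
    simpa only [conjTranspose_eq_transpose_of_trivial] using
      hT₃pd.conjTranspose_mul_mul_eq_inv_of_mul_self J_mem_unitaryGroup hJT₃sqJ
  refine ⟨transpose_mul_J_mul_eq_J_iff.2 ((mem_iff_transpose_J_mul_mul_J_eq_inv hT₃s hT₃u).2 hJT₃J),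
    ?_, hW⟩
  rw [transpose_nonsing_inv, hT₃s.eq, hW]

theorem stmt19 {n : ℕ} (W T₃ : Matrix (Fin n ⊕ Fin n) (Fin n ⊕ Fin n) ℝ)
    (hWs : W.IsSymm) (hWpd : W.PosDef) (hWsp : Wᵀ * J n * W = J n)
    (hT₃pd : T₃.PosDef) (hT₃s : T₃.IsSymm) (hT₃sq : T₃ * T₃ = W⁻¹) :
    T₃ᵀ * J n * T₃ = J n ∧ W = T₃⁻¹ * (T₃⁻¹)ᵀ ∧ W = T₃⁻¹ * T₃⁻¹ :=
  stmt19_general W T₃ hWsp hT₃pd hT₃s hT₃sq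
end
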